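/- Let α > −1 and β > −1 be real numbers and n ≥ 1 an integer. Then for all real x, Q_n^{(α,β)}(x) = [(β+2)_{n−1} (α+β+2)_{n−1} / ((α+1)_{n−1} n!)] (x+1) (d/dx) P_n^{(α−1,β+1)}(x). -/

import Mathlib

/-- The Pochhammer symbol (rising factorial) `(a)_k = a (a+1) ⋯ (a+k-1)`. -/
noncomputable def poch (a : ℝ) (k : ℕ) : ℝ := (ascPochhammer ℝ k).eval a

/-- The Jacobi polynomial
`P_n^{(α,β)}(x) = Σ_{k=0}^{n} [(n+α+β+1)_k / k!] [(α+k+1)_{n−k} / (n−k)!] ((x−1)/2)^k`,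
valid for all real `α`, `β`. -/
noncomputable def jacobiP (α β : ℝ) (n : ℕ) (x : ℝ) : ℝ :=
  ∑ k ∈ Finset.range (n + 1),
    poch ((n : ℝ) + α + β + 1) k / Nat.factorial k *
      (poch (α + k + 1) (n - k) / Nat.factorial (n - k)) * ((x - 1) / 2) ^ k

/-- `Q_n^{(α,β)}(x) = [(β+2)_{n−1} (α+β+2)_{n−1} / ((α+1)_n n!)]
`[n(n+α+β+1) P_n^{(α,β)}(x) − (β+1)(x−1) P_n^{(α,β)}'(x)]`. -/
noncomputable def Qfun (α β : ℝ) (n : ℕ) (x : ℝ) : ℝ :=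
  poch (β + 2) (n - 1) * poch (α + β + 2) (n - 1) / (poch (α + 1) n * Nat.factorial n) *
    ((n : ℝ) * ((n : ℝ) + α + β + 1) * jacobiP α β n x -
      (β + 1) * (x - 1) * deriv (jacobiP α β n) x)

/-- `Q_n^{(α,β)}(x) = [(β+2)_{n−1} (α+β+2)_{n−1} / ((α+1)_{n−1} n!)] (x+1) (d/dx) P_n^{(α−1,β+1)}(x)`. -/
noncomputable def cc (α β : ℝ) (n k : ℕ) : ℝ :=
  poch ((n : ℝ) + α + β + 1) k / Nat.factorial k *
    (poch (α + k + 1) (n - k) / Nat.factorial (n - k))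

lemma poch_succ_right (a : ℝ) (m : ℕ) : poch a (m + 1) = poch a m * (a + m) :=
  ascPochhammer_succ_eval m a

lemma poch_succ_left (a : ℝ) (m : ℕ) : poch a (m + 1) = a * poch (a + 1) m := by
  unfold poch
  rw [ascPochhammer_succ_left]
  simp [Polynomial.eval_comp]

lemma jacobiP_eq (α β : ℝ) (n : ℕ) (x : ℝ) :
    jacobiP α β n x = ∑ k ∈ Finset.range (n + 1), cc α β n k * ((x - 1) / 2) ^ k := rfl

lemma jacobiP_hasDerivAt (α β : ℝ) (n : ℕ) (x : ℝ) :
    HasDerivAt (jacobiP α β n)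
      (∑ k ∈ Finset.range (n + 1),
        cc α β n k * ((k : ℝ) * ((x - 1) / 2) ^ (k - 1) * (1 / 2))) x := by
  have h : ∀ k ∈ Finset.range (n + 1),
      HasDerivAt (fun y : ℝ => cc α β n k * ((y - 1) / 2) ^ k)
        (cc α β n k * ((k : ℝ) * ((x - 1) / 2) ^ (k - 1) * (1 / 2))) x := by
    intro k _
    have h1 : HasDerivAt (fun y : ℝ => ((y - 1) / 2) ^ k)
        ((k : ℝ) * ((x - 1) / 2) ^ (k - 1) * (1 / 2)) x := by
      have := (((hasDerivAt_id x).sub_const 1).div_const 2).fun_pow k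
      simpa using this
    exact h1.const_mul _
  exact HasDerivAt.fun_sum h

lemma jacobiP_deriv (α β : ℝ) (n : ℕ) (x : ℝ) :
    deriv (jacobiP α β n) x =
      ∑ k ∈ Finset.range (n + 1),
        cc α β n k * ((k : ℝ) * ((x - 1) / 2) ^ (k - 1) * (1 / 2)) :=
  (jacobiP_hasDerivAt α β n x).deriv

lemma cc_shift (α β : ℝ) (n k : ℕ) :
    cc (α - 1) (β + 1) n k =
      poch ((n : ℝ) + α + β + 1) k / Nat.factorial k *
        (poch (α + k) (n - k) / Nat.factorial (n - k)) := by
  unfold cc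
  have h1 : (n : ℝ) + (α - 1) + (β + 1) + 1 = (n : ℝ) + α + β + 1 := by ring
  have h2 : α - 1 + (k : ℝ) + 1 = α + k := by ring
  rw [h1, h2]

lemma coeff_top (α β : ℝ) (n : ℕ) :
    ((n : ℝ) * ((n : ℝ) + α + β + 1) - (β + 1) * n) * cc α β n n =
      (α + n) * ((n : ℝ) * cc (α - 1) (β + 1) n n) := by
  rw [cc_shift]
  unfold cc
  simp only [Nat.sub_self]
  unfold poch
  simp only [ascPochhammer_zero, Polynomial.eval_one]
  ring

lemma coeff_mid (α β : ℝ) (n k : ℕ) (hk : k < n) :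
    ((n : ℝ) * ((n : ℝ) + α + β + 1) - (β + 1) * k) * cc α β n k =
      (α + n) * ((k : ℝ) * cc (α - 1) (β + 1) n k +
        ((k : ℝ) + 1) * cc (α - 1) (β + 1) n (k + 1)) := by
  obtain ⟨m, rfl⟩ : ∃ m, n = k + m + 1 := ⟨n - k - 1, by omega⟩
  rw [cc_shift, cc_shift]
  unfold cc
  have e1 : k + m + 1 - k = m + 1 := by omega
  have e2 : k + m + 1 - (k + 1) = m := by omega
  rw [e1, e2]
  have p1 : poch (α + k + 1) (m + 1) = poch (α + k + 1) m * (α + k + 1 + m) :=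
    poch_succ_right _ m
  have p2 : poch (α + k) (m + 1) = (α + k) * poch (α + k + 1) m := by
    have := poch_succ_left (α + (k : ℝ)) m
    rw [this]
  have p4 : (α + ((k : ℕ) + 1 : ℕ) : ℝ) = α + k + 1 := by push_cast; ring
  have p5 : poch (((k + m + 1 : ℕ) : ℝ) + α + β + 1) (k + 1) =
      poch (((k + m + 1 : ℕ) : ℝ) + α + β + 1) k * (((k + m + 1 : ℕ) : ℝ) + α + β + 1 + k) :=
    poch_succ_right _ k
  rw [p4, p1, p2, p5]
  have f1 : (Nat.factorial (k + 1) : ℝ) = (k + 1) * Nat.factorial k := by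
    rw [Nat.factorial_succ]; push_cast; ring
  have f2 : (Nat.factorial (m + 1) : ℝ) = (m + 1) * Nat.factorial m := by
    rw [Nat.factorial_succ]; push_cast; ring
  rw [f1, f2]
  have hk0 : (Nat.factorial k : ℝ) ≠ 0 := Nat.cast_ne_zero.mpr (Nat.factorial_ne_zero k)
  have hm0 : (Nat.factorial m : ℝ) ≠ 0 := Nat.cast_ne_zero.mpr (Nat.factorial_ne_zero m)
  have hk1 : ((k : ℝ) + 1) ≠ 0 := by positivity
  have hm1 : ((m : ℝ) + 1) ≠ 0 := by positivity
  push_cast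
  field_simp
  ring

lemma key (α β : ℝ) (n : ℕ) (x : ℝ) :
    (n : ℝ) * ((n : ℝ) + α + β + 1) * jacobiP α β n x -
      (β + 1) * (x - 1) * deriv (jacobiP α β n) x =
    (α + n) * ((x + 1) * deriv (jacobiP (α - 1) (β + 1) n) x) := by
  rw [jacobiP_deriv, jacobiP_deriv, jacobiP_eq]
  set t : ℝ := (x - 1) / 2 with ht
  -- LHS as a single sum
  have hL : (n : ℝ) * ((n : ℝ) + α + β + 1) *
        (∑ k ∈ Finset.range (n + 1), cc α β n k * t ^ k) -
      (β + 1) * (x - 1) *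
        (∑ k ∈ Finset.range (n + 1), cc α β n k * ((k : ℝ) * t ^ (k - 1) * (1 / 2))) =
      ∑ k ∈ Finset.range (n + 1),
        ((n : ℝ) * ((n : ℝ) + α + β + 1) - (β + 1) * k) * cc α β n k * t ^ k := by
    rw [Finset.mul_sum, Finset.mul_sum, ← Finset.sum_sub_distrib]
    refine Finset.sum_congr rfl fun k _ => ?_
    cases k with
    | zero => simp
    | succ j =>
      have : t ^ (j + 1) = t ^ j * ((x - 1) / 2) := by rw [pow_succ, ht]
      simp only [Nat.add_sub_cancel, this]
      push_cast
      ring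
  rw [hL]
  -- RHS derivative sum reindexed
  have hR : (∑ k ∈ Finset.range (n + 1),
        cc (α - 1) (β + 1) n k * ((k : ℝ) * t ^ (k - 1) * (1 / 2))) =
      ∑ j ∈ Finset.range n,
        cc (α - 1) (β + 1) n (j + 1) * (((j : ℝ) + 1) * t ^ j * (1 / 2)) := by
    rw [Finset.sum_range_succ']
    simp
  rw [hR]
  -- expand (x+1) = 2t + 2
  have hx1 : x + 1 = 2 * t + 2 := by rw [ht]; ring
  rw [hx1]
  have expand : (α + (n : ℝ)) * ((2 * t + 2) *
        ∑ j ∈ Finset.range n,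
          cc (α - 1) (β + 1) n (j + 1) * (((j : ℝ) + 1) * t ^ j * (1 / 2))) =
      (∑ j ∈ Finset.range n,
        (α + (n : ℝ)) * (((j : ℝ) + 1) * cc (α - 1) (β + 1) n (j + 1)) * t ^ (j + 1)) +
      ∑ j ∈ Finset.range n,
        (α + (n : ℝ)) * (((j : ℝ) + 1) * cc (α - 1) (β + 1) n (j + 1)) * t ^ j := by
    rw [Finset.mul_sum, Finset.mul_sum, ← Finset.sum_add_distrib]
    refine Finset.sum_congr rfl fun j _ => ?_
    rw [pow_succ]
    ring
  rw [expand]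
  -- first sum on RHS equals sum over range (n+1) of k * d_k * t^k
  have hshift : (∑ j ∈ Finset.range n,
        (α + (n : ℝ)) * (((j : ℝ) + 1) * cc (α - 1) (β + 1) n (j + 1)) * t ^ (j + 1)) =
      ∑ k ∈ Finset.range (n + 1),
        (α + (n : ℝ)) * ((k : ℝ) * cc (α - 1) (β + 1) n k) * t ^ k := by
    rw [Finset.sum_range_succ']
    push_cast
    simp
  rw [hshift]
  -- split LHS and first RHS sum at k = n
  rw [Finset.sum_range_succ, Finset.sum_range_succ
    (f := fun k => (α + (n : ℝ)) * ((k : ℝ) * cc (α - 1) (β + 1) n k) * t ^ k)]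
  have htop : ((n : ℝ) * ((n : ℝ) + α + β + 1) - (β + 1) * n) * cc α β n n * t ^ n =
      (α + (n : ℝ)) * ((n : ℝ) * cc (α - 1) (β + 1) n n) * t ^ n := by
    rw [coeff_top]
  have hmid : ∀ k ∈ Finset.range n,
      ((n : ℝ) * ((n : ℝ) + α + β + 1) - (β + 1) * k) * cc α β n k * t ^ k =
        (α + (n : ℝ)) * ((k : ℝ) * cc (α - 1) (β + 1) n k) * t ^ k +
        (α + (n : ℝ)) * (((k : ℝ) + 1) * cc (α - 1) (β + 1) n (k + 1)) * t ^ k := by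
    intro k hk
    rw [Finset.mem_range] at hk
    have := coeff_mid α β n k hk
    calc ((n : ℝ) * ((n : ℝ) + α + β + 1) - (β + 1) * k) * cc α β n k * t ^ k
        = ((α + n) * ((k : ℝ) * cc (α - 1) (β + 1) n k +
            ((k : ℝ) + 1) * cc (α - 1) (β + 1) n (k + 1))) * t ^ k := by rw [this]
      _ = _ := by ring
  rw [Finset.sum_congr rfl hmid, Finset.sum_add_distrib, htop]
  ring


theorem Qfun_eq_deriv_rep (α β : ℝ) (hα : -1 < α) (hβ : -1 < β) (n : ℕ) (hn : 1 ≤ n) (x : ℝ) :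
    Qfun α β n x =
      poch (β + 2) (n - 1) * poch (α + β + 2) (n - 1) /
        (poch (α + 1) (n - 1) * Nat.factorial n) *
        ((x + 1) * deriv (jacobiP (α - 1) (β + 1) n) x) := by
  obtain ⟨m, rfl⟩ : ∃ m, n = m + 1 := ⟨n - 1, by omega⟩
  rw [Qfun, key]
  simp only [Nat.add_sub_cancel]
  have hsucc : poch (α + 1) (m + 1) = poch (α + 1) m * (α + 1 + m) := poch_succ_right _ m
  rw [hsucc]
  have hp : (0 : ℝ) < poch (α + 1) m := ascPochhammer_pos m _ (by linarith)
  have hm : (0 : ℝ) ≤ (m : ℝ) := Nat.cast_nonneg m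
  have hs : (0 : ℝ) < α + 1 + m := by linarith
  have hf : (0 : ℝ) < (Nat.factorial (m + 1) : ℝ) := by
    exact_mod_cast Nat.factorial_pos (m + 1)
  have hcast : (α + ((m + 1 : ℕ) : ℝ)) = α + 1 + m := by push_cast; ring
  rw [hcast]
  field_simp
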